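/- arXiv:2204.06992 — 2 statements merged into one kernel-verified Lean document; each statement's English description precedes it below -/
import Mathlib

section
/- Let ~ be the congruence on the free monoid on {x, y} generated by the single relation yx = xxyy. Then every word equivalent to yxx under ~ has the form x^{2k}·yxx·y^{2k} or x^{2k}·xxyyx·y^{2k} for some natural number k. -/
/-- The letter `x` of the two-letter alphabet. -/
def xw : FreeMonoid Bool := FreeMonoid.of false

/-- The letter `y` of the two-letter alphabet. -/
def yw : FreeMonoid Bool := FreeMonoid.of true

/-- The congruence on the free monoid on `{x, y}` generated by the single relation
`yx = xxyy`. -/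
def yxCon : Con (FreeMonoid Bool) :=
  conGen (fun a b => a = yw * xw ∧ b = xw * xw * yw * yw)

/-! The words `A k = x^{2k} yxx y^{2k}` and `B k = x^{2k+2} yyx y^{2k}` form a chain
`A 0 – B 0 – A 1 – B 1 – ⋯` in which neighbours differ by one rewrite `yx ↔ xxyy`. In each of
these words, of the block shape `x^a y^b x^c y^d`, the letter pattern forces where `yx` and
`xxyy` can occur, and every such occurrence is one of the chain's rewrites. Hence `yxCon` lies
below the syntactic congruence of the set of these words, and the class of `yxx = A 0` lies in
that set. -/

open List

section SyntacticCon

variable {M : Type*} [Monoid M]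

def syntacticCon (S : Set M) : Con M where
  r a b := ∀ u v, u * a * v ∈ S ↔ u * b * v ∈ S
  iseqv := ⟨fun _ _ _ => Iff.rfl, fun h u v => (h u v).symm,
    fun h₁ h₂ u v => (h₁ u v).trans (h₂ u v)⟩
  mul' {a b c d} hab hcd u v := by
    have h₁ := hab u (c * v)
    have h₂ := hcd (u * b) v
    simp only [mul_assoc] at h₁ h₂ ⊢
    exact h₁.trans h₂

theorem mem_iff_of_syntacticCon {S : Set M} {a b : M} (h : syntacticCon S a b) :
    a ∈ S ↔ b ∈ S := by
  simpa using h 1 1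

end SyntacticCon

theorem List.getElem?_length_add_of_append_eq {α : Type*} {l p r w : List α}
    (h : l ++ p ++ r = w) (j : ℕ) (hj : j < p.length) : w[l.length + j]? = p[j]? := by
  subst h
  rw [append_assoc, getElem?_append_right (by omega), Nat.add_sub_cancel_left,
    getElem?_append_left hj]

theorem List.append_append_eq_of_length_eq {α : Type*} {l r L R p : List α} (q : List α)
    (h : l ++ p ++ r = L ++ p ++ R) (hl : l.length = L.length) :
    l ++ q ++ r = L ++ q ++ R := by
  obtain ⟨rfl, h⟩ := append_inj (by simpa only [append_assoc] using h) hl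
  rw [append_cancel_left h]

theorem FreeMonoid.toList_of_pow {α : Type*} (a : α) (n : ℕ) :
    (of a ^ n).toList = replicate n a := by
  induction n with
  | zero => rfl
  | succ n ih => rw [pow_succ, toList_mul, ih, toList_of, replicate_succ']

/-- The word `x^a y^b x^c y^d`, with `x = false` and `y = true`. -/
def blockWord (a b c d : ℕ) : List Bool :=
  replicate a false ++ replicate b true ++ replicate c false ++ replicate d true

theorem getElem?_blockWord_eq_some_false {a b c d i : ℕ} :
    (blockWord a b c d)[i]? = some false ↔ i < a ∨ a + b ≤ i ∧ i < a + b + c := by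
  simp only [blockWord, getElem?_append, getElem?_replicate, length_append, length_replicate]
  split_ifs <;> simp <;> omega

theorem getElem?_blockWord_eq_some_true {a b c d i : ℕ} :
    (blockWord a b c d)[i]? = some true ↔
      a ≤ i ∧ i < a + b ∨ a + b + c ≤ i ∧ i < a + b + c + d := by
  simp only [blockWord, getElem?_append, getElem?_replicate, length_append, length_replicate]
  split_ifs <;> simp <;> omega

theorem length_of_append_yx_append_eq_blockWord {l r : List Bool} {a b c d : ℕ}
    (h : l ++ [true, false] ++ r = blockWord a b c d) : l.length + 1 = a + b ∧ 0 < c := by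
  have h₀ := getElem?_length_add_of_append_eq h 0 (by simp)
  have h₁ := getElem?_length_add_of_append_eq h 1 (by simp)
  simp only [getElem?_cons_zero, getElem?_cons_succ, getElem?_blockWord_eq_some_false,
    getElem?_blockWord_eq_some_true] at h₀ h₁
  omega

theorem length_of_append_xxyy_append_eq_blockWord {l r : List Bool} {a b c d : ℕ}
    (hb : 0 < b) (hc : 0 < c) (h : l ++ [false, false, true, true] ++ r = blockWord a b c d) :
    l.length + 2 = a ∧ 2 ≤ b ∨ l.length + 2 = a + b + c ∧ 2 ≤ c ∧ 2 ≤ d := by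
  have h₀ := getElem?_length_add_of_append_eq h 0 (by simp)
  have h₁ := getElem?_length_add_of_append_eq h 1 (by simp)
  have h₂ := getElem?_length_add_of_append_eq h 2 (by simp)
  have h₃ := getElem?_length_add_of_append_eq h 3 (by simp)
  simp only [getElem?_cons_zero, getElem?_cons_succ, getElem?_blockWord_eq_some_false,
    getElem?_blockWord_eq_some_true] at h₀ h₁ h₂ h₃
  omega

/-- `w` is `A k = x^{2k} yxx y^{2k}` or `B k = x^{2k+2} yyx y^{2k}` for some `k`. -/
def IsYxxClassWord (w : List Bool) : Prop :=
  ∃ k, w = blockWord (2 * k) 1 2 (2 * k) ∨ w = blockWord (2 * k + 2) 2 1 (2 * k)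

theorem isYxxClassWord_append_yx_append_iff {l r : List Bool} :
    IsYxxClassWord (l ++ [true, false] ++ r) ↔
      IsYxxClassWord (l ++ [false, false, true, true] ++ r) := by
  have hA_yx (k : ℕ) : blockWord (2 * k) 1 2 (2 * k) =
      replicate (2 * k) false ++ [true, false] ++ (false :: replicate (2 * k) true) := by
    simp [blockWord]
  have hB_xxyy (k : ℕ) : blockWord (2 * k + 2) 2 1 (2 * k) =
      replicate (2 * k) false ++ [false, false, true, true] ++
        (false :: replicate (2 * k) true) := by
    simp [blockWord, replicate_add]
  have hB_yx (k : ℕ) : blockWord (2 * k + 2) 2 1 (2 * k) =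
      (replicate (2 * k + 2) false ++ [true]) ++ [true, false] ++ replicate (2 * k) true := by
    simp [blockWord, replicate_add]
  have hA_xxyy (k : ℕ) : blockWord (2 * (k + 1)) 1 2 (2 * (k + 1)) =
      (replicate (2 * k + 2) false ++ [true]) ++ [false, false, true, true] ++
        replicate (2 * k) true := by
    simp [blockWord, mul_add, replicate_succ]
  constructor
  · rintro ⟨k, h | h⟩
    · have hl := length_of_append_yx_append_eq_blockWord h
      rw [hA_yx] at h
      exact ⟨k, .inr <| (hB_xxyy k).symm ▸ append_append_eq_of_length_eq _ h (by simp; omega)⟩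
    · have hl := length_of_append_yx_append_eq_blockWord h
      rw [hB_yx] at h
      exact ⟨k + 1,
        .inl <| (hA_xxyy k).symm ▸ append_append_eq_of_length_eq _ h (by simp; omega)⟩
  · rintro ⟨k, h | h⟩
    · have hl := length_of_append_xxyy_append_eq_blockWord one_pos two_pos h
      obtain ⟨k, rfl⟩ : ∃ k', k = k' + 1 := Nat.exists_eq_add_one.2 (by omega)
      rw [hA_xxyy] at h
      exact ⟨k, .inr <| (hB_yx k).symm ▸ append_append_eq_of_length_eq _ h (by simp; omega)⟩
    · have hl := length_of_append_xxyy_append_eq_blockWord two_pos one_pos h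
      rw [hB_xxyy] at h
      exact ⟨k, .inl <| (hA_yx k).symm ▸ append_append_eq_of_length_eq _ h (by simp; omega)⟩

theorem yxCon_le_syntacticCon : yxCon ≤ syntacticCon {w | IsYxxClassWord w.toList} := by
  refine Con.conGen_le.2 ?_
  rintro _ _ ⟨rfl, rfl⟩ u v
  simpa [xw, yw] using isYxxClassWord_append_yx_append_iff (l := u.toList) (r := v.toList)

/-- Every word equivalent to `yxx` under the congruence generated by `yx = xxyy` has
the form `x^{2k} · yxx · y^{2k}` or `x^{2k} · xxyyx · y^{2k}` for some `k ∈ ℕ`. -/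
theorem yxx_equiv_classification (w : FreeMonoid Bool) (hw : yxCon w (yw * xw * xw)) :
    ∃ k : ℕ,
      w = xw ^ (2 * k) * (yw * xw * xw) * yw ^ (2 * k) ∨
      w = xw ^ (2 * k) * (xw * xw * yw * yw * xw) * yw ^ (2 * k) := by
  obtain ⟨k, hk⟩ : IsYxxClassWord w.toList :=
    (mem_iff_of_syntacticCon (yxCon_le_syntacticCon hw)).2 ⟨0, .inl rfl⟩
  refine ⟨k, hk.imp (fun h => ?_) (fun h => ?_)⟩ <;>
    exact FreeMonoid.toList.injective <| h.trans <| by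
      simp [blockWord, xw, yw, FreeMonoid.toList_of_pow, replicate_add]
end

section
/- In Sing(I_n) with n ≥ 3, for distinct i, j, k the elements f̄_{i,j} satisfy f̄_{i,j} f̄_{i,k} = f̄_{j,k} f̄_{i,j} = f̄_{i,k} f̄_{j,k} and f̄_{i,j} f̄_{j,i} = f̄_{i,k} f̄_{k,i}, and for distinct i, j, k, l they satisfy f̄_{i,j} f̄_{k,l} = f̄_{k,l} f̄_{i,j} and f̄_{k,i} f̄_{i,j} f̄_{j,k} f̄_{k,l} = f̄_{k,l} f̄_{l,i} f̄_{i,j} f̄_{j,l}. -/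
set_option linter.unnecessarySeqFocus false


/-- Injective partial maps `{1,…,m} → {1,…,n}`, the hom-sets of the symmetric
inverse category `I`. -/
def PInj (m n : ℕ) : Type :=
  {f : Fin m → Option (Fin n) // ∀ i j k, f i = some k → f j = some k → i = j}

/-- Left-to-right relational composition of injective partial maps. -/
def PInj.comp {m n k : ℕ} (α : PInj m n) (β : PInj n k) : PInj m k :=
  ⟨fun i => (α.1 i).bind β.1, by
    intro i j c hi hj
    rcases Option.bind_eq_some_iff.mp hi with ⟨a, ha, ha'⟩
    rcases Option.bind_eq_some_iff.mp hj with ⟨b, hb, hb'⟩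
    obtain rfl : a = b := β.2 a b c ha' hb'
    exact α.2 i j a ha hb⟩

/-- The identity of `I_n`. -/
def PInj.id (n : ℕ) : PInj n n :=
  ⟨fun i => some i, by
    intro i j k hi hj
    rw [Option.some_inj] at hi hj
    rw [hi, hj]⟩

/-- The domain of a partial map. -/
def PInj.dom {m n : ℕ} (α : PInj m n) : Set (Fin m) := {i | (α.1 i).isSome}

/-- The action of `α ∈ I_{m,n}` on a tuple `a ∈ M₀ⁿ`, giving `ᵅa ∈ M₀ᵐ`. -/
def act {M : Type*} [Monoid M] {m n : ℕ} (α : PInj m n)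
    (a : Fin n → WithZero M) : Fin m → WithZero M :=
  fun i => (α.1 i).elim 0 a

/-- The support of a tuple over `M₀`. -/
def supp {M : Type*} [Monoid M] {n : ℕ} (a : Fin n → WithZero M) : Set (Fin n) :=
  {i | a i ≠ 0}

/-- Composition in the wreath product category `M ≀ I`:
`(a,α)∘(b,β) = (a · ᵅb, αβ)`. -/
def mulC {M : Type*} [Monoid M] {m n k : ℕ}
    (p : (Fin m → WithZero M) × PInj m n) (q : (Fin n → WithZero M) × PInj n k) :
    (Fin m → WithZero M) × PInj m k :=
  (p.1 * act p.2 q.1, p.2.comp q.2)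



/-- The transposition `(i j)` as an element of `I_n`. -/
def swapP {n : ℕ} (i j : Fin n) : PInj n n :=
  ⟨fun k => some (Equiv.swap i j k), by
    intro a b c ha hb
    rw [Option.some_inj] at ha hb
    exact (Equiv.swap i j).injective (ha.trans hb.symm)⟩

/-- The partial identity with domain `{1,…,n} \ {i}`. -/
def eP {n : ℕ} (i : Fin n) : PInj n n :=
  ⟨fun k => if k = i then none else some k, by
    intro a b c ha hb
    dsimp only at ha hb
    split_ifs at ha hb <;> simp_all⟩

/-- The map `f_{i,j} ∈ Sing(I_n)`: undefined at `i`, sends `j ↦ i`, fixes other points. -/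
def fP {n : ℕ} (i j : Fin n) : PInj n n :=
  ⟨fun k => if k = i then none else if k = j then some i else some k, by
    intro a b c ha hb
    dsimp only at ha hb
    split_ifs at ha hb <;> simp_all⟩

/-- The tuple in `M₀ⁿ` with entry `c` in position `i` and `1` elsewhere. -/
def tupAt {M : Type*} [Monoid M] {n : ℕ} (i : Fin n) (c : WithZero M) :
    Fin n → WithZero M :=
  fun k => if k = i then c else 1

/-- The `{0,1}`-tuple `1_{{i}ᶜ}` with support `{i}ᶜ`. -/
def oneE {M : Type*} [Monoid M] {n : ℕ} (i : Fin n) : Fin n → WithZero M :=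
  tupAt i 0

/-- The tuple `x⁽ⁱ⁾ = (1,…,1,x,1,…,1)` with `x ∈ M` in position `i`. -/
def xTup {M : Type*} [Monoid M] {n : ℕ} (i : Fin n) (x : M) : Fin n → WithZero M :=
  tupAt i (x : WithZero M)

open scoped Classical in
/-- The partial identity `id_{supp(a)}` on the support of a tuple. -/
noncomputable def idOnSupp {M : Type*} [Monoid M] {n : ℕ} (a : Fin n → WithZero M) :
    PInj n n :=
  ⟨fun i => if a i = 0 then none else some i, by
    intro i j c hi hj
    dsimp only at hi hj
    split_ifs at hi hj <;> simp_all⟩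

/-- The `{0,1}`-tuple `1_{dom(α)}` with support `dom(α)`. -/
def oneDom {M : Type*} [Monoid M] {m n : ℕ} (α : PInj m n) : Fin m → WithZero M :=
  fun i => if (α.1 i).isSome then 1 else 0

open scoped Classical in
/-- The restriction of `α` to the support of the tuple `a`. -/
noncomputable def restrictP {M : Type*} [Monoid M] {m n : ℕ}
    (a : Fin m → WithZero M) (α : PInj m n) : PInj m n :=
  ⟨fun i => if a i = 0 then none else α.1 i, by
    intro i j c hi hj
    dsimp only at hi hj
    split_ifs at hi hj <;> first
      | exact Option.noConfusion hi
      | exact Option.noConfusion hj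
      | exact α.2 i j c hi hj⟩

/-- The identity on `{1,…,n}` viewed as a partial map `{1,…,n} → {1,…,n+1}`. -/
def lamP (n : ℕ) : PInj n (n + 1) :=
  ⟨fun i => some i.castSucc, by
    intro i j c hi hj
    rw [Option.some_inj] at hi hj
    exact Fin.castSucc_injective n (hi.trans hj.symm)⟩

/-- The identity on `{1,…,n}` viewed as a partial map `{1,…,n+1} → {1,…,n}`,
undefined at `n+1`. -/
def rhoP (n : ℕ) : PInj (n + 1) n :=
  ⟨fun i => if h : (i : ℕ) < n then some ⟨i, h⟩ else none, by
    intro i j c hi hj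
    dsimp only at hi hj
    split_ifs at hi hj
    rw [Option.some_inj] at hi hj
    have : (i : ℕ) = (j : ℕ) := by
      have := congrArg Fin.val (hi.trans hj.symm)
      simpa using this
    exact Fin.ext this⟩

/-- The tensor (horizontal stacking) `α ⊕ β`. -/
def tensor {m n k l : ℕ} (α : PInj m n) (β : PInj k l) : PInj (m + k) (n + l) :=
  ⟨fun i =>
    if h : (i : ℕ) < m then (α.1 ⟨i, h⟩).map (Fin.castAdd l)
    else (β.1 ⟨(i : ℕ) - m, by have := i.isLt; omega⟩).map (Fin.natAdd n), by
    intro i j c hi hj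
    dsimp only at hi hj
    rcases Nat.lt_or_ge (i : ℕ) m with h1 | h1 <;> rcases Nat.lt_or_ge (j : ℕ) m with h2 | h2
    · rw [dif_pos h1] at hi; rw [dif_pos h2] at hj
      rcases Option.map_eq_some_iff.mp hi with ⟨a, ha, rfl⟩
      rcases Option.map_eq_some_iff.mp hj with ⟨b, hb, hab⟩
      have hba : b = a := by
        have := congrArg Fin.val hab
        simpa using Fin.ext this
      subst hba
      have := α.2 ⟨i, h1⟩ ⟨j, h2⟩ b ha hb
      have hv : (i : ℕ) = (j : ℕ) := by simpa using this
      exact Fin.ext hv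
    · rw [dif_pos h1] at hi; rw [dif_neg (by omega)] at hj
      rcases Option.map_eq_some_iff.mp hi with ⟨a, ha, rfl⟩
      rcases Option.map_eq_some_iff.mp hj with ⟨b, hb, hab⟩
      have hv : n + (b : ℕ) = (Fin.castAdd l a : ℕ) := by
        simpa using congrArg Fin.val hab
      have := a.isLt
      simp only [Fin.coe_castAdd] at hv
      omega
    · rw [dif_neg (by omega)] at hi; rw [dif_pos h2] at hj
      rcases Option.map_eq_some_iff.mp hj with ⟨a, ha, rfl⟩
      rcases Option.map_eq_some_iff.mp hi with ⟨b, hb, hab⟩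
      have hv : n + (b : ℕ) = (Fin.castAdd l a : ℕ) := by
        simpa using congrArg Fin.val hab
      have := a.isLt
      simp only [Fin.coe_castAdd] at hv
      omega
    · rw [dif_neg (by omega)] at hi; rw [dif_neg (by omega)] at hj
      rcases Option.map_eq_some_iff.mp hi with ⟨a, ha, hac⟩
      rcases Option.map_eq_some_iff.mp hj with ⟨b, hb, hbc⟩
      have hba : b = a := by
        have := congrArg Fin.val (hbc.trans hac.symm)
        simp only [Fin.coe_natAdd] at this
        exact Fin.ext (by omega)
      subst hba
      have := β.2 _ _ b ha hb
      have hv : (i : ℕ) - m = (j : ℕ) - m := by simpa using this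
      exact Fin.ext (by omega)⟩

/-- The unique element `U` of `I_{1,0}`. -/
def Upi : PInj 1 0 := ⟨fun _ => none, fun _ _ c _ _ => c.elim0⟩

/-- The unique element `Ū` of `I_{0,1}`. -/
def Ubar : PInj 0 1 := ⟨fun i => i.elim0, fun i _ _ _ _ => i.elim0⟩


/-! Each relation is an identity between composites of maps that fix every point outside
`{i, j, k, l}`, so it is checked pointwise by splitting on which of these points the argument
is. -/

@[ext]
theorem PInj.ext {m n : ℕ} {α β : PInj m n} (h : ∀ x, α.1 x = β.1 x) : α = β :=
  Subtype.ext (funext h)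

@[simp]
theorem PInj.comp_apply {m n k : ℕ} (α : PInj m n) (β : PInj n k) (x : Fin m) :
    (α.comp β).1 x = (α.1 x).bind β.1 :=
  rfl

section

variable {n : ℕ} {i j k l x : Fin n}

@[simp]
theorem eP_apply_self (i : Fin n) : (eP i).1 i = none :=
  if_pos rfl

@[simp]
theorem eP_apply_of_ne (h : x ≠ i) : (eP i).1 x = some x :=
  if_neg h

@[simp]
theorem fP_apply_left (i j : Fin n) : (fP i j).1 i = none :=
  if_pos rfl

@[simp]
theorem fP_apply_right (h : i ≠ j) : (fP i j).1 j = some i := by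
  simp [fP, h.symm]

@[simp]
theorem fP_apply_of_ne (hi : x ≠ i) (hj : x ≠ j) : (fP i j).1 x = some x := by
  simp [fP, hi, hj]

theorem fP_comp_fP_swap (i j : Fin n) : (fP i j).comp (fP j i) = eP i := by
  ext1 x
  by_cases x = i <;> by_cases x = j <;> simp_all [Ne.symm]

theorem fP_comp_fP_same_fst (hij : i ≠ j) (hik : i ≠ k) :
    (fP i j).comp (fP i k) = (fP j k).comp (fP i j) := by
  ext1 x
  by_cases x = i <;> by_cases x = j <;> by_cases x = k <;> simp_all [Ne.symm]

theorem fP_comp_fP_same_snd (hij : i ≠ j) (hik : i ≠ k) (hjk : j ≠ k) :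
    (fP i k).comp (fP j k) = (fP j k).comp (fP i j) := by
  ext1 x
  by_cases x = i <;> by_cases x = j <;> by_cases x = k <;> simp_all [Ne.symm]

theorem fP_comp_fP_comm (hik : i ≠ k) (hil : i ≠ l) (hjk : j ≠ k) (hjl : j ≠ l) :
    (fP i j).comp (fP k l) = (fP k l).comp (fP i j) := by
  ext1 x
  by_cases x = i <;> by_cases x = j <;> by_cases x = k <;> by_cases x = l <;> simp_all [Ne.symm]

theorem fP_chain_relation (hik : i ≠ k) (hil : i ≠ l) (hjk : j ≠ k) (hjl : j ≠ l) :
    (((fP k i).comp (fP i j)).comp (fP j k)).comp (fP k l) =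
      (((fP k l).comp (fP l i)).comp (fP i j)).comp (fP j l) := by
  ext1 x
  by_cases x = i <;> by_cases x = j <;> by_cases x = k <;> by_cases x = l <;> simp_all [Ne.symm]

end

theorem singular_f_relations'_general (n : ℕ) :
    (∀ i j k : Fin n, i ≠ j → i ≠ k → j ≠ k →
      PInj.comp (fP i j) (fP i k) = PInj.comp (fP j k) (fP i j) ∧
      PInj.comp (fP j k) (fP i j) = PInj.comp (fP i k) (fP j k) ∧
      PInj.comp (fP i j) (fP j i) = PInj.comp (fP i k) (fP k i)) ∧
    (∀ i j k l : Fin n, i ≠ j → i ≠ k → i ≠ l → j ≠ k → j ≠ l → k ≠ l →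
      PInj.comp (fP i j) (fP k l) = PInj.comp (fP k l) (fP i j) ∧
      PInj.comp (PInj.comp (PInj.comp (fP k i) (fP i j)) (fP j k)) (fP k l)
        = PInj.comp (PInj.comp (PInj.comp (fP k l) (fP l i)) (fP i j)) (fP j l)) :=
  ⟨fun i j k hij hik hjk =>
    ⟨fP_comp_fP_same_fst hij hik, (fP_comp_fP_same_snd hij hik hjk).symm,
      (fP_comp_fP_swap i j).trans (fP_comp_fP_swap i k).symm⟩,
    fun _ _ _ _ _ hik hil hjk hjl _ =>
    ⟨fP_comp_fP_comm hik hil hjk hjl, fP_chain_relation hik hil hjk hjl⟩⟩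

/-- **Relations (SI3)–(SI7) (excluding (SI5),(SI6)) in `Sing(I_n)`** (`n ≥ 3`): for
distinct `i, j, k`: `f_{i,j} f_{i,k} = f_{j,k} f_{i,j} = f_{i,k} f_{j,k}` and
`f_{i,j} f_{j,i} = f_{i,k} f_{k,i}`; and for distinct `i, j, k, l`:
`f_{i,j} f_{k,l} = f_{k,l} f_{i,j}` and
`f_{k,i} f_{i,j} f_{j,k} f_{k,l} = f_{k,l} f_{l,i} f_{i,j} f_{j,l}`. -/
theorem singular_f_relations' (n : ℕ) (hn : 3 ≤ n) :
    (∀ i j k : Fin n, i ≠ j → i ≠ k → j ≠ k →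
      PInj.comp (fP i j) (fP i k) = PInj.comp (fP j k) (fP i j) ∧
      PInj.comp (fP j k) (fP i j) = PInj.comp (fP i k) (fP j k) ∧
      PInj.comp (fP i j) (fP j i) = PInj.comp (fP i k) (fP k i)) ∧
    (∀ i j k l : Fin n, i ≠ j → i ≠ k → i ≠ l → j ≠ k → j ≠ l → k ≠ l →
      PInj.comp (fP i j) (fP k l) = PInj.comp (fP k l) (fP i j) ∧
      PInj.comp (PInj.comp (PInj.comp (fP k i) (fP i j)) (fP j k)) (fP k l)
        = PInj.comp (PInj.comp (PInj.comp (fP k l) (fP l i)) (fP i j)) (fP j l)) :=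
  singular_f_relations'_general n
end
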